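/- Suppose ω is a smooth p-form on ℝ^m (p < m) satisfying d*(dω/√(1+|dω|²)) = ξ₀ for a constant (m−p)-form ξ₀. Then ξ₀ = 0. -/

import Mathlib

open Finset

noncomputable section

/-- The `p`-forms on `ℝ^m` are represented as functions assigning to each point
a `p`-multilinear expression `(Fin p → ℝ^m) → ℝ`; this predicate says that the
values are (continuous) alternating `p`-linear maps and that each component
function `x ↦ ω x v` is smooth. -/
def IsSmoothForm (m p : ℕ)
    (ω : EuclideanSpace ℝ (Fin m) → (Fin p → EuclideanSpace ℝ (Fin m)) → ℝ) : Prop :=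
  (∀ x, ∃ A : (EuclideanSpace ℝ (Fin m)) [⋀^Fin p]→L[ℝ] ℝ, ∀ v, ω x v = A v) ∧
  (∀ v, ContDiff ℝ (⊤ : ℕ∞) fun x => ω x v)

/-- The squared (Hilbert–Schmidt) norm of a `k`-form at a point, computed in the
standard orthonormal basis of `ℝ^m`: `|η|² = Σ_{i₁<⋯<i_k} (η(e_{i₁},…,e_{i_k}))²`. -/
def formNormSq (m k : ℕ) (η : (Fin k → EuclideanSpace ℝ (Fin m)) → ℝ) : ℝ :=
  ∑ s : Finset (Fin m),
    if h : s.card = k then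
      (η fun j : Fin k => EuclideanSpace.basisFun (Fin m) ℝ (s.orderEmbOfFin h j)) ^ 2
    else 0

/-- The exterior differential of a `p`-form on `ℝ^m`:
`(dω)(v₀,…,v_p) = Σ_j (−1)^j ∂_{v_j} [ω(v₀,…,v̂_j,…,v_p)]`. -/
def extDer (m p : ℕ)
    (ω : EuclideanSpace ℝ (Fin m) → (Fin p → EuclideanSpace ℝ (Fin m)) → ℝ) :
    EuclideanSpace ℝ (Fin m) → (Fin (p + 1) → EuclideanSpace ℝ (Fin m)) → ℝ :=
  fun x w => ∑ j : Fin (p + 1),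
    (-1 : ℝ) ^ (j : ℕ) *
      fderiv ℝ (fun y => ω y fun k : Fin p => w (j.succAbove k)) x (w j)

/-- The codifferential of a `(p+1)`-form on `ℝ^m`:
`(δη)(v₁,…,v_p) = −Σ_i ∂_{e_i} [η(e_i, v₁,…,v_p)]` in the standard
orthonormal basis `e₁,…,e_m`. -/
def codiff (m p : ℕ)
    (η : EuclideanSpace ℝ (Fin m) → (Fin (p + 1) → EuclideanSpace ℝ (Fin m)) → ℝ) :
    EuclideanSpace ℝ (Fin m) → (Fin p → EuclideanSpace ℝ (Fin m)) → ℝ :=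
  fun x v => -∑ i : Fin m,
    fderiv ℝ (fun y => η y (Fin.cons (EuclideanSpace.basisFun (Fin m) ℝ i) v)) x
      (EuclideanSpace.basisFun (Fin m) ℝ i)


section Aux

lemma swap_succAbove_castSucc {p : ℕ} (j : Fin p) (k : Fin p) :
    Equiv.swap j.castSucc j.succ (j.castSucc.succAbove k) = j.succ.succAbove k := by
  simp only [Fin.succAbove, Equiv.swap_apply_def, Fin.lt_def, Fin.ext_iff,
    Fin.coe_castSucc, Fin.val_succ]
  split_ifs <;> simp_all <;> omega

lemma swap_succAbove_of_ne {p : ℕ} (j : Fin p) (l : Fin (p+1))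
    (h1 : l ≠ j.castSucc) (h2 : l ≠ j.succ) :
    ∃ a b : Fin p, a ≠ b ∧
      ∀ k, Equiv.swap j.castSucc j.succ (l.succAbove k) = l.succAbove (Equiv.swap a b k) := by
  obtain ⟨a, ha⟩ := Fin.exists_succAbove_eq h1.symm
  obtain ⟨b, hb⟩ := Fin.exists_succAbove_eq h2.symm
  refine ⟨a, b, ?_, ?_⟩
  · rintro rfl; rw [ha] at hb; exact (Fin.castSucc_lt_succ (i := j)).ne hb
  · intro k
    rcases eq_or_ne k a with rfl | hka
    · rw [ha, Equiv.swap_apply_left, Equiv.swap_apply_left, hb]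
    rcases eq_or_ne k b with rfl | hkb
    · rw [hb, Equiv.swap_apply_right, Equiv.swap_apply_right, ha]
    rw [Equiv.swap_apply_of_ne_of_ne (fun h => hka (l.succAbove_right_injective (h.trans ha.symm)))
        (fun h => hkb (l.succAbove_right_injective (h.trans hb.symm))),
      Equiv.swap_apply_of_ne_of_ne hka hkb]

lemma succAbove_adj_eq {p : ℕ} (j k : Fin p) (hkj : k ≠ j) :
    j.castSucc.succAbove k = j.succ.succAbove k := by
  simp only [Fin.succAbove, Fin.lt_def, Fin.ext_iff, Fin.coe_castSucc, Fin.val_succ]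
  have : k.val ≠ j.val := fun h => hkj (Fin.ext h)
  split_ifs <;> simp_all <;> omega

variable {m p : ℕ} {ω : EuclideanSpace ℝ (Fin m) → (Fin p → EuclideanSpace ℝ (Fin m)) → ℝ}
  (hω : IsSmoothForm m p ω)

include hω

lemma omega_zero {w : Fin p → EuclideanSpace ℝ (Fin m)} {a b : Fin p} (hab : a ≠ b)
    (h : w a = w b) (y : EuclideanSpace ℝ (Fin m)) : ω y w = 0 := by
  obtain ⟨A, hA⟩ := hω.1 y
  rw [hA]
  exact (A.toAlternatingMap).map_eq_zero_of_eq w h hab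

lemma omega_swap {a b : Fin p} (hab : a ≠ b) (w : Fin p → EuclideanSpace ℝ (Fin m))
    (y : EuclideanSpace ℝ (Fin m)) : ω y (w ∘ Equiv.swap a b) = - ω y w := by
  obtain ⟨A, hA⟩ := hω.1 y
  rw [hA, hA]
  exact (A.toAlternatingMap).map_swap w hab

lemma extDer_swap_adj (j : Fin p) (x : EuclideanSpace ℝ (Fin m))
    (w : Fin (p+1) → EuclideanSpace ℝ (Fin m)) :
    extDer m p ω x (w ∘ Equiv.swap j.castSucc j.succ) = - extDer m p ω x w := by
  set s := Equiv.swap j.castSucc j.succ with hs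
  have key : ∀ l : Fin (p+1),
      (-1 : ℝ) ^ (l : ℕ) *
        fderiv ℝ (fun y => ω y fun k : Fin p => (w ∘ s) (l.succAbove k)) x ((w ∘ s) l)
      = -((-1 : ℝ) ^ ((s l : Fin (p+1)) : ℕ) *
        fderiv ℝ (fun y => ω y fun k : Fin p => w ((s l).succAbove k)) x (w (s l))) := by
    intro l
    rcases eq_or_ne l j.castSucc with rfl | h1
    · have hsl : s j.castSucc = j.succ := Equiv.swap_apply_left _ _
      have htup : (fun k : Fin p => (w ∘ s) (j.castSucc.succAbove k))
          = fun k : Fin p => w (j.succ.succAbove k) := by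
        funext k
        simp only [Function.comp_apply, hs]
        rw [swap_succAbove_castSucc]
      rw [htup, hsl]
      simp only [Function.comp_apply, hsl]
      rw [Fin.coe_castSucc, Fin.val_succ, pow_succ]
      ring
    rcases eq_or_ne l j.succ with rfl | h2
    · have hsl : s j.succ = j.castSucc := Equiv.swap_apply_right _ _
      have htup : (fun k : Fin p => (w ∘ s) (j.succ.succAbove k))
          = fun k : Fin p => w (j.castSucc.succAbove k) := by
        funext k
        have h3 := congrArg (Equiv.swap j.castSucc j.succ) (swap_succAbove_castSucc j k)
        rw [Equiv.swap_apply_self] at h3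
        simp only [Function.comp_apply, hs, ← h3]
      rw [htup, hsl]
      simp only [Function.comp_apply, hsl]
      rw [Fin.coe_castSucc, Fin.val_succ, pow_succ]
      ring
    · have hsl : s l = l := Equiv.swap_apply_of_ne_of_ne h1 h2
      obtain ⟨a, b, hab, hcomm⟩ := swap_succAbove_of_ne j l h1 h2
      have htup : (fun k : Fin p => (w ∘ s) (l.succAbove k))
          = (fun k : Fin p => w (l.succAbove k)) ∘ Equiv.swap a b := by
        funext k; simp only [Function.comp_apply, hs, hcomm]
      have hfun : (fun y => ω y fun k : Fin p => (w ∘ s) (l.succAbove k))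
          = fun y => -(ω y fun k : Fin p => w (l.succAbove k)) := by
        funext y; rw [htup]; exact omega_swap hω hab _ y
      rw [hfun, hsl]
      simp only [Function.comp_apply, hsl, fderiv_fun_neg, ContinuousLinearMap.neg_apply]
      ring
  calc extDer m p ω x (w ∘ s)
      = ∑ l : Fin (p+1), -((-1 : ℝ) ^ ((s l : Fin (p+1)) : ℕ) *
          fderiv ℝ (fun y => ω y fun k : Fin p => w ((s l).succAbove k)) x (w (s l))) := by
        unfold extDer; exact Finset.sum_congr rfl fun l _ => key l
    _ = - ∑ l : Fin (p+1), ((-1 : ℝ) ^ ((s l : Fin (p+1)) : ℕ) *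
          fderiv ℝ (fun y => ω y fun k : Fin p => w ((s l).succAbove k)) x (w (s l))) := by
        rw [Finset.sum_neg_distrib]
    _ = - extDer m p ω x w := by
        unfold extDer
        rw [Equiv.sum_comp s (fun l : Fin (p+1) => (-1 : ℝ) ^ (l : ℕ) *
          fderiv ℝ (fun y => ω y fun k : Fin p => w (l.succAbove k)) x (w l))]

lemma extDer_comp_swap : ∀ d : ℕ, ∀ a b : Fin (p+1), (a : ℕ) < b → (b : ℕ) - a = d →
    ∀ (x : EuclideanSpace ℝ (Fin m)) (w : Fin (p+1) → EuclideanSpace ℝ (Fin m)),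
    extDer m p ω x (w ∘ Equiv.swap a b) = - extDer m p ω x w := by
  intro d
  induction d using Nat.strong_induction_on with
  | _ d ih =>
    intro a b hab hd x w
    rcases Nat.lt_or_ge d 2 with hd2 | hd2
    · -- adjacent case : d = 1
      have hd1 : (b : ℕ) = a + 1 := by omega
      have hap : (a : ℕ) < p := by have := b.isLt; omega
      have ha : a = (⟨a, hap⟩ : Fin p).castSucc := by simp [Fin.ext_iff]
      have hb : b = (⟨a, hap⟩ : Fin p).succ := by simp [Fin.ext_iff]; omega
      rw [ha, hb]
      exact extDer_swap_adj hω _ x w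
    · -- composite case
      have hbp : 1 ≤ (b : ℕ) := by omega
      set b' : Fin (p+1) := ⟨(b : ℕ) - 1, by omega⟩ with hb'
      have h1 : b ≠ b' := by simp [hb', Fin.ext_iff]; omega
      have h2 : b ≠ a := by simp [Fin.ext_iff]; omega
      have hsw : Equiv.swap a b = Equiv.swap b' a * Equiv.swap b b' * Equiv.swap b' a := by
        rw [Equiv.swap_mul_swap_mul_swap h1 h2]
      have hcomp : w ∘ Equiv.swap a b
          = ((w ∘ Equiv.swap b' a) ∘ Equiv.swap b b') ∘ Equiv.swap b' a := by
        funext k; simp [hsw, Equiv.Perm.mul_apply, Function.comp]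
      have hab' : (a : ℕ) < b' := by simp [hb']; omega
      have hbb' : (b' : ℕ) < b := by show (b : ℕ) - 1 < b; omega
      have e1 : ∀ (w' : Fin (p+1) → EuclideanSpace ℝ (Fin m)),
          extDer m p ω x (w' ∘ Equiv.swap b' a) = - extDer m p ω x w' := by
        intro w'
        have := ih (d-1) (by omega) a b' hab' (by simp [hb']; omega) x w'
        rwa [Equiv.swap_comm b' a]
      have e2 : ∀ (w' : Fin (p+1) → EuclideanSpace ℝ (Fin m)),
          extDer m p ω x (w' ∘ Equiv.swap b b') = - extDer m p ω x w' := by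
        intro w'
        have := ih 1 (by omega) b' b hbb' (by simp [hb']; omega) x w'
        rwa [Equiv.swap_comm b b']
      rw [hcomp, e1, e2, e1]
      ring

lemma extDer_comp_swap' {a b : Fin (p+1)} (hab : a ≠ b) (x : EuclideanSpace ℝ (Fin m))
    (w : Fin (p+1) → EuclideanSpace ℝ (Fin m)) :
    extDer m p ω x (w ∘ Equiv.swap a b) = - extDer m p ω x w := by
  rcases Nat.lt_or_ge (a : ℕ) (b : ℕ) with h | h
  · exact extDer_comp_swap hω _ a b h rfl x w
  · have h' : (b : ℕ) < a := by
      rcases Nat.lt_or_ge (b : ℕ) (a : ℕ) with h2 | h2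
      · exact h2
      · exact absurd (Fin.ext (le_antisymm h2 h)) hab
    rw [Equiv.swap_comm a b]
    exact extDer_comp_swap hω _ b a h' rfl x w

lemma extDer_comp_perm (σ : Equiv.Perm (Fin (p+1))) (x : EuclideanSpace ℝ (Fin m))
    (w : Fin (p+1) → EuclideanSpace ℝ (Fin m)) :
    extDer m p ω x (w ∘ σ) = (Equiv.Perm.sign σ : ℤ) * extDer m p ω x w := by
  have H : ∀ σ : Equiv.Perm (Fin (p+1)), ∀ w : Fin (p+1) → EuclideanSpace ℝ (Fin m),
      extDer m p ω x (w ∘ σ) = (Equiv.Perm.sign σ : ℤ) * extDer m p ω x w := by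
    intro σ
    refine Equiv.Perm.swap_induction_on σ (by simp [Function.comp_def]) ?_
    intro f c d hcd hf w
    have hcomp : w ∘ ⇑(Equiv.swap c d * f) = (w ∘ Equiv.swap c d) ∘ ⇑f := by
      funext k; simp [Equiv.Perm.mul_apply, Function.comp]
    rw [hcomp, hf (w ∘ Equiv.swap c d), extDer_comp_swap' hω hcd]
    simp [Equiv.Perm.sign_swap hcd]
  exact H σ w

lemma extDer_adj_zero (j : Fin p) (x : EuclideanSpace ℝ (Fin m))
    (w : Fin (p+1) → EuclideanSpace ℝ (Fin m)) (h : w j.castSucc = w j.succ) :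
    extDer m p ω x w = 0 := by
  set T : ℝ := (-1 : ℝ) ^ (j : ℕ) *
    fderiv ℝ (fun y => ω y fun k : Fin p => w (j.castSucc.succAbove k)) x (w j.castSucc) with hT
  have key : ∀ l : Fin (p+1),
      (-1 : ℝ) ^ (l : ℕ) *
        fderiv ℝ (fun y => ω y fun k : Fin p => w (l.succAbove k)) x (w l)
      = (if l = j.castSucc then T else 0) + (if l = j.succ then -T else 0) := by
    intro l
    rcases eq_or_ne l j.castSucc with rfl | h1
    · rw [if_pos rfl, if_neg (Fin.castSucc_lt_succ (i := j)).ne, hT, Fin.coe_castSucc, add_zero]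
    rcases eq_or_ne l j.succ with rfl | h2
    · rw [if_neg h1, if_pos rfl, zero_add, hT]
      have htup : (fun k : Fin p => w (j.succ.succAbove k))
          = fun k : Fin p => w (j.castSucc.succAbove k) := by
        funext k
        rcases eq_or_ne k j with rfl | hkj
        · rw [Fin.succAbove_succ_self, Fin.succAbove_castSucc_self, h]
        · rw [succAbove_adj_eq j k hkj]
      rw [htup, ← h, Fin.val_succ, pow_succ]
      ring
    · rw [if_neg h1, if_neg h2, add_zero]
      obtain ⟨a, ha⟩ := Fin.exists_succAbove_eq h1.symm
      obtain ⟨b, hb⟩ := Fin.exists_succAbove_eq h2.symm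
      have hab : a ≠ b := by
        rintro rfl; rw [ha] at hb; exact (Fin.castSucc_lt_succ (i := j)).ne hb
      have hfun : (fun y => ω y fun k : Fin p => w (l.succAbove k)) = fun _ => (0 : ℝ) := by
        funext y
        exact omega_zero hω hab (by rw [ha, hb, h]) y
      rw [hfun, fderiv_fun_const]
      simp
  unfold extDer
  rw [Finset.sum_congr rfl fun l _ => key l, Finset.sum_add_distrib]
  simp [Finset.sum_ite_eq']

lemma extDer_zero_of_eq {a b : Fin (p+1)} (hab : a ≠ b) (x : EuclideanSpace ℝ (Fin m))
    (w : Fin (p+1) → EuclideanSpace ℝ (Fin m)) (h : w a = w b) :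
    extDer m p ω x w = 0 := by
  rcases p with _ | q
  · exact absurd (Fin.ext (by omega : (a : ℕ) = b)) hab
  · -- bring the two equal entries to positions 0 and 1
    set j : Fin (q+1) := 0 with hj
    have hb1 : Equiv.swap (0 : Fin (q+2)) a b ≠ 0 := by
      intro hc
      have h5 := congrArg (Equiv.swap (0 : Fin (q+2)) a) hc
      rw [Equiv.swap_apply_self, Equiv.swap_apply_left] at h5
      exact hab h5.symm
    set τ : Equiv.Perm (Fin (q+2)) :=
      Equiv.swap 0 a * Equiv.swap 1 (Equiv.swap 0 a b) with hτ
    have hτ0 : τ j.castSucc = a := by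
      have : j.castSucc = (0 : Fin (q+2)) := rfl
      rw [this, hτ, Equiv.Perm.mul_apply,
        Equiv.swap_apply_of_ne_of_ne (by simp) (Ne.symm hb1), Equiv.swap_apply_left]
    have hτ1 : τ j.succ = b := by
      have : j.succ = (1 : Fin (q+2)) := rfl
      rw [this, hτ, Equiv.Perm.mul_apply, Equiv.swap_apply_left, Equiv.swap_apply_self]
    have h2 : extDer m (q+1) ω x (w ∘ τ) = 0 := by
      refine extDer_adj_zero hω j x (w ∘ τ) ?_
      simp only [Function.comp_apply, hτ0, hτ1, h]
    have h3 := extDer_comp_perm hω τ x w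
    rw [h2] at h3
    have h4 : ((Equiv.Perm.sign τ : ℤ) : ℝ) ≠ 0 := by
      rcases Int.units_eq_one_or (Equiv.Perm.sign τ) with hs | hs <;> simp [hs]
    exact (mul_eq_zero.mp h3.symm).resolve_left h4

omit hω in
lemma formNormSq_nonneg (k : ℕ) (η : (Fin k → EuclideanSpace ℝ (Fin m)) → ℝ) :
    0 ≤ formNormSq m k η := by
  apply Finset.sum_nonneg
  intro s _
  by_cases h : s.card = k
  · rw [dif_pos h]; positivity
  · rw [dif_neg h]

lemma sq_le_formNormSq (x : EuclideanSpace ℝ (Fin m)) (wI : Fin (p+1) → Fin m) :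
    (extDer m p ω x (fun j => EuclideanSpace.basisFun (Fin m) ℝ (wI j))) ^ 2
      ≤ formNormSq m (p+1) (extDer m p ω x) := by
  by_cases hinj : Function.Injective wI
  · set s : Finset (Fin m) := Finset.image wI Finset.univ with hsdef
    have hcard : s.card = p + 1 := by
      rw [hsdef, Finset.card_image_of_injective _ hinj, Finset.card_univ, Fintype.card_fin]
    have hb1 : Function.Bijective (fun j : Fin (p+1) =>
        (⟨wI j, Finset.mem_image_of_mem _ (Finset.mem_univ j)⟩ : {y // y ∈ s})) := by
      rw [Fintype.bijective_iff_injective_and_card]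
      constructor
      · intro j1 j2 hj
        exact hinj (congrArg Subtype.val hj)
      · rw [Fintype.card_coe, hcard, Fintype.card_fin]
    have hb2 : Function.Bijective (fun j : Fin (p+1) =>
        (⟨s.orderEmbOfFin hcard j, Finset.orderEmbOfFin_mem s hcard j⟩ : {y // y ∈ s})) := by
      rw [Fintype.bijective_iff_injective_and_card]
      constructor
      · intro j1 j2 hj
        exact (s.orderEmbOfFin hcard).injective (congrArg Subtype.val hj)
      · rw [Fintype.card_coe, hcard, Fintype.card_fin]
    set ρ : Equiv.Perm (Fin (p+1)) :=
      (Equiv.ofBijective _ hb1).trans (Equiv.ofBijective _ hb2).symm with hρ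
    have key : ∀ j, s.orderEmbOfFin hcard (ρ j) = wI j := by
      intro j
      have : (Equiv.ofBijective _ hb2) (ρ j)
          = (⟨wI j, Finset.mem_image_of_mem _ (Finset.mem_univ j)⟩ : {y // y ∈ s}) := by
        rw [hρ]
        exact (Equiv.ofBijective _ hb2).apply_symm_apply _
      exact congrArg Subtype.val this
    have htup : (fun j : Fin (p+1) => EuclideanSpace.basisFun (Fin m) ℝ (wI j))
        = (fun j : Fin (p+1) => EuclideanSpace.basisFun (Fin m) ℝ (s.orderEmbOfFin hcard j))
          ∘ ρ := by
      funext j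
      simp only [Function.comp_apply, key]
    rw [htup, extDer_comp_perm hω ρ x, mul_pow]
    have hsgn : (((Equiv.Perm.sign ρ : ℤ) : ℝ)) ^ 2 = 1 := by
      rcases Int.units_eq_one_or (Equiv.Perm.sign ρ) with hs | hs <;> rw [hs] <;> norm_num
    rw [hsgn, one_mul]
    have hterm : (extDer m p ω x
          (fun j : Fin (p+1) => EuclideanSpace.basisFun (Fin m) ℝ (s.orderEmbOfFin hcard j))) ^ 2
        = if h : s.card = p + 1 then
            (extDer m p ω x
              (fun j : Fin (p+1) => EuclideanSpace.basisFun (Fin m) ℝ (s.orderEmbOfFin h j))) ^ 2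
          else 0 := by
      rw [dif_pos hcard]
    rw [hterm]
    refine Finset.single_le_sum (f := fun s' : Finset (Fin m) => if h : s'.card = p + 1 then
        (extDer m p ω x
          (fun j : Fin (p+1) => EuclideanSpace.basisFun (Fin m) ℝ (s'.orderEmbOfFin h j))) ^ 2
      else 0) ?_ (Finset.mem_univ s)
    intro s' _
    by_cases h : s'.card = p + 1
    · rw [dif_pos h]; positivity
    · rw [dif_neg h]
  · obtain ⟨a, b, hab, hne⟩ := Function.not_injective_iff.mp hinj
    have : extDer m p ω x (fun j => EuclideanSpace.basisFun (Fin m) ℝ (wI j)) = 0 :=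
      extDer_zero_of_eq hω hne x _
        (congrArg (fun t => (EuclideanSpace.basisFun (Fin m) ℝ) t) hab)
    rw [this]
    simpa using formNormSq_nonneg (p+1) (extDer m p ω x)

lemma contDiff_extDer (w0 : Fin (p+1) → EuclideanSpace ℝ (Fin m)) :
    ContDiff ℝ 1 fun x => extDer m p ω x w0 := by
  unfold extDer
  apply ContDiff.sum
  intro j _
  apply ContDiff.mul contDiff_const
  exact ((hω.2 _).fderiv_right (by exact WithTop.coe_le_coe.mpr le_top)).clm_apply contDiff_const

lemma contDiff_normSq : ContDiff ℝ 1 fun x => formNormSq m (p+1) (extDer m p ω x) := by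
  unfold formNormSq
  apply ContDiff.sum
  intro s _
  by_cases h : s.card = p + 1
  · simp only [dif_pos h]
    exact (contDiff_extDer hω _).pow 2
  · simp only [dif_neg h]
    exact contDiff_const

lemma contDiff_r :
    ContDiff ℝ 1 fun x =>
      (Real.sqrt (1 + formNormSq m (p + 1) (extDer m p ω x)))⁻¹ := by
  rw [contDiff_iff_contDiffAt]
  intro x
  have h1 : (0 : ℝ) < 1 + formNormSq m (p + 1) (extDer m p ω x) := by
    have := formNormSq_nonneg (m := m) (p + 1) (extDer m p ω x)
    linarith
  apply ContDiffAt.inv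
  · exact ContDiffAt.sqrt (ContDiffAt.add contDiffAt_const (contDiff_normSq hω).contDiffAt) h1.ne'
  · exact (Real.sqrt_pos.2 h1).ne'

lemma contDiff_g (w0 : Fin (p+1) → EuclideanSpace ℝ (Fin m)) :
    ContDiff ℝ 1 fun x =>
      (Real.sqrt (1 + formNormSq m (p + 1) (extDer m p ω x)))⁻¹ * extDer m p ω x w0 :=
  (contDiff_r hω).mul (contDiff_extDer hω w0)

lemma g_bound (x : EuclideanSpace ℝ (Fin m)) (wI : Fin (p+1) → Fin m) :
    |(Real.sqrt (1 + formNormSq m (p + 1) (extDer m p ω x)))⁻¹ *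
      extDer m p ω x (fun j => EuclideanSpace.basisFun (Fin m) ℝ (wI j))| ≤ 1 := by
  set N := formNormSq m (p + 1) (extDer m p ω x) with hN
  have hN0 : 0 ≤ N := formNormSq_nonneg _ _
  have h1 : (0 : ℝ) < 1 + N := by linarith
  set val := extDer m p ω x (fun j => EuclideanSpace.basisFun (Fin m) ℝ (wI j)) with hval
  have hsq : val ^ 2 ≤ N := sq_le_formNormSq hω x wI
  have habs : |val| ≤ Real.sqrt (1 + N) := by
    have h2 : val ^ 2 ≤ Real.sqrt (1 + N) ^ 2 := by
      rw [Real.sq_sqrt h1.le]; linarith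
    exact abs_le_of_sq_le_sq h2 (Real.sqrt_nonneg _)
  rw [abs_mul, abs_inv, abs_of_nonneg (Real.sqrt_nonneg _)]
  rw [inv_mul_le_iff₀ (Real.sqrt_pos.2 h1), mul_one]
  exact habs

end Aux

/-- Theorem 9.1 (generalized Chern type result), in codifferential form: if a
smooth `p`-form `ω` on `ℝ^m` (`p < m`) satisfies
`δ(dω/√(1+|dω|²)) = ω₀` for a constant `p`-form `ω₀` (equivalently
`d*(dω/√(1+|dω|²)) = ξ₀` for a constant `(m−p)`-form `ξ₀`), then the constant
form vanishes. -/


theorem stmt_15 (m p : ℕ) (hp : p < m)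
    (ω : EuclideanSpace ℝ (Fin m) → (Fin p → EuclideanSpace ℝ (Fin m)) → ℝ)
    (hω : IsSmoothForm m p ω)
    (A₀ : (EuclideanSpace ℝ (Fin m)) [⋀^Fin p]→L[ℝ] ℝ)
    (heq : ∀ x v,
      codiff m p (fun y w =>
          (Real.sqrt (1 + formNormSq m (p + 1) (extDer m p ω y)))⁻¹ *
            extDer m p ω y w) x v
        = A₀ v) :
    A₀ = 0 := by
  have main : ∀ vI : Fin p → Fin m, Function.Injective vI →
      A₀ (fun k => (EuclideanSpace.basisFun (Fin m) ℝ) (vI k)) = 0 := by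
    intro vI hvI
    obtain ⟨n, rfl⟩ := Nat.exists_eq_succ_of_ne_zero (show m ≠ 0 by omega)
    set e : Fin (n+1) → EuclideanSpace ℝ (Fin (n+1)) :=
      fun i => (EuclideanSpace.basisFun (Fin (n+1)) ℝ) i with he
    set vE : Fin p → EuclideanSpace ℝ (Fin (n+1)) := fun k => e (vI k) with hvE
    set c : ℝ := A₀ vE with hc
    set g : Fin (n+1) → EuclideanSpace ℝ (Fin (n+1)) → ℝ := fun i x =>
      (Real.sqrt (1 + formNormSq (n+1) (p + 1) (extDer (n+1) p ω x)))⁻¹ *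
        extDer (n+1) p ω x (Fin.cons (e i) vE) with hg
    have hgdiff : ∀ i, ContDiff ℝ 1 (g i) := fun i => contDiff_g hω _
    have hgbound : ∀ i x, |g i x| ≤ 1 := by
      intro i x
      have h := g_bound hω x (Fin.cons i vI)
      have htup : (fun j : Fin (p+1) =>
            (EuclideanSpace.basisFun (Fin (n+1)) ℝ) (Fin.cons (α := fun _ => Fin (n+1)) i vI j))
          = Fin.cons (e i) vE := by
        funext j
        cases j using Fin.cases with
        | zero => simp [he]
        | succ k => simp [he, hvE]
      rwa [htup] at h
    have hdiv : ∀ x, ∑ i : Fin (n+1), fderiv ℝ (g i) x (e i) = -c := by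
      intro x
      have h : -∑ i : Fin (n+1), fderiv ℝ (g i) x (e i) = c := heq x vE
      linarith
    -- the divergence theorem estimate
    have key : ∀ R : ℝ, 0 < R → |c| * (2*R)^(n+1) ≤ (n+1 : ℝ) * (2 * (2*R)^n) := by
      intro R hR
      set a : Fin (n+1) → ℝ := fun _ => -R with ha
      set b : Fin (n+1) → ℝ := fun _ => R with hb
      have hle : a ≤ b := fun i => by simp [ha, hb]; linarith
      set E := EuclideanSpace.equiv (Fin (n+1)) ℝ with hE
      set F : Fin (n+1) → (Fin (n+1) → ℝ) → ℝ := fun i z => g i (E.symm z) with hF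
      set F' : Fin (n+1) → (Fin (n+1) → ℝ) → (Fin (n+1) → ℝ) →L[ℝ] ℝ := fun i z =>
        (fderiv ℝ (g i) (E.symm z)).comp
          (E.symm : (Fin (n+1) → ℝ) →L[ℝ] EuclideanSpace ℝ (Fin (n+1))) with hF'
      have hsingle : ∀ i : Fin (n+1), E.symm (Pi.single i 1) = e i := by
        intro i
        show E.symm (Pi.single i 1) = (EuclideanSpace.basisFun (Fin (n+1)) ℝ) i
        rw [EuclideanSpace.basisFun_apply]
        rfl
      have hdiv' : ∀ z, ∑ i : Fin (n+1), F' i z (Pi.single i 1) = -c := by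
        intro z
        have h1 : ∀ i : Fin (n+1), F' i z (Pi.single i 1) = fderiv ℝ (g i) (E.symm z) (e i) := by
          intro i
          rw [hF']
          simp only [ContinuousLinearMap.coe_comp', Function.comp_apply,
            ContinuousLinearEquiv.coe_coe]
          rw [hsingle]
        rw [Finset.sum_congr rfl fun i _ => h1 i]
        exact hdiv (E.symm z)
      have EQ := MeasureTheory.integral_divergence_of_hasFDerivAt_off_countable'
        a b hle F F' ∅ Set.countable_empty
        (fun i => ((hgdiff i).continuous.comp E.symm.continuous).continuousOn)
        (fun x _ i => (((hgdiff i).differentiable one_ne_zero _).hasFDerivAt).comp x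
          (ContinuousLinearEquiv.hasFDerivAt _))
        (by
          rw [show (fun x => ∑ i : Fin (n+1), F' i x (Pi.single i 1)) = fun _ => -c from
            funext hdiv']
          exact MeasureTheory.integrableOn_const isCompact_Icc.measure_lt_top.ne)
      rw [show (fun x => ∑ i : Fin (n+1), F' i x (Pi.single i 1)) = fun _ => -c from
          funext hdiv'] at EQ
      have hLHS : (∫ _x in Set.Icc a b, (-c)) = (2*R)^(n+1) * (-c) := by
        rw [MeasureTheory.setIntegral_const, smul_eq_mul, MeasureTheory.measureReal_def, Real.volume_Icc_pi_toReal hle]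
        congr 1
        rw [Finset.prod_congr rfl (fun i _ => show b i - a i = 2*R by rw [ha, hb]; ring),
          Finset.prod_const, Finset.card_univ, Fintype.card_fin]
      have hface : ∀ (i : Fin (n+1)) (t : ℝ),
          |∫ x in Set.Icc (a ∘ i.succAbove) (b ∘ i.succAbove), F i (i.insertNth t x)|
            ≤ (2*R)^n := by
        intro i t
        have hle' : (a ∘ i.succAbove) ≤ (b ∘ i.succAbove) := fun j => hle (i.succAbove j)
        have hvol : (MeasureTheory.volume
            (Set.Icc (a ∘ i.succAbove) (b ∘ i.succAbove))).toReal = (2*R)^n := by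
          rw [Real.volume_Icc_pi_toReal hle']
          rw [Finset.prod_congr rfl
              (fun j _ => show (b ∘ i.succAbove) j - (a ∘ i.succAbove) j = 2*R by
                simp [ha, hb]; ring),
            Finset.prod_const, Finset.card_univ, Fintype.card_fin]
        have hbd := MeasureTheory.norm_setIntegral_le_of_norm_le_const_ae'
          (μ := MeasureTheory.volume) (C := 1)
          (f := fun x : Fin n → ℝ => F i (i.insertNth t x))
          (s := Set.Icc (a ∘ i.succAbove) (b ∘ i.succAbove))
          (isCompact_Icc.measure_lt_top)
          (Filter.Eventually.of_forall (fun x _ => by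
            simpa [Real.norm_eq_abs, hF] using hgbound i (E.symm (i.insertNth t x))))
        rw [Real.norm_eq_abs] at hbd
        calc |∫ x in Set.Icc (a ∘ i.succAbove) (b ∘ i.succAbove), F i (i.insertNth t x)|
            ≤ 1 * (MeasureTheory.volume
                (Set.Icc (a ∘ i.succAbove) (b ∘ i.succAbove))).toReal := hbd
          _ = (2*R)^n := by rw [one_mul, hvol]
      have habs : |c| * (2*R)^(n+1) = |(2*R)^(n+1) * (-c)| := by
        rw [abs_mul, abs_neg, abs_of_nonneg (by positivity : (0:ℝ) ≤ (2*R)^(n+1))]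
        ring
      rw [habs, ← hLHS, EQ]
      calc |∑ i : Fin (n+1),
            ((∫ x in Set.Icc (a ∘ i.succAbove) (b ∘ i.succAbove), F i (i.insertNth (b i) x))
              - ∫ x in Set.Icc (a ∘ i.succAbove) (b ∘ i.succAbove), F i (i.insertNth (a i) x))|
          ≤ ∑ i : Fin (n+1),
            |(∫ x in Set.Icc (a ∘ i.succAbove) (b ∘ i.succAbove), F i (i.insertNth (b i) x))
              - ∫ x in Set.Icc (a ∘ i.succAbove) (b ∘ i.succAbove), F i (i.insertNth (a i) x)| :=
            Finset.abs_sum_le_sum_abs _ _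
        _ ≤ ∑ _i : Fin (n+1), (2 * (2*R)^n) := by
            refine Finset.sum_le_sum fun i _ => ?_
            calc |(∫ x in Set.Icc (a ∘ i.succAbove) (b ∘ i.succAbove), F i (i.insertNth (b i) x))
                - ∫ x in Set.Icc (a ∘ i.succAbove) (b ∘ i.succAbove), F i (i.insertNth (a i) x)|
                ≤ |∫ x in Set.Icc (a ∘ i.succAbove) (b ∘ i.succAbove), F i (i.insertNth (b i) x)|
                  + |∫ x in Set.Icc (a ∘ i.succAbove) (b ∘ i.succAbove), F i (i.insertNth (a i) x)| :=
                  abs_sub _ _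
              _ ≤ (2*R)^n + (2*R)^n := add_le_add (hface i (b i)) (hface i (a i))
              _ = 2 * (2*R)^n := by ring
        _ = (n+1 : ℝ) * (2 * (2*R)^n) := by
            rw [Finset.sum_const, Finset.card_univ, Fintype.card_fin, nsmul_eq_mul]
            push_cast
            ring
    -- conclude c = 0
    by_contra hc0
    have hcpos : 0 < |c| := abs_pos.2 hc0
    set R : ℝ := ((n+1 : ℝ) + 1) / |c| with hR
    have hRpos : 0 < R := by positivity
    have h1 := key R hRpos
    have h2 : (0:ℝ) < (2*R)^n := by positivity
    have h3 : |c| * (2*R) ≤ 2 * (n+1 : ℝ) := by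
      rw [pow_succ] at h1
      nlinarith [h1, h2]
    have h4 : |c| * (2*R) = 2 * ((n+1 : ℝ) + 1) := by
      rw [hR]
      rw [mul_comm, mul_assoc, div_mul_cancel₀ _ (ne_of_gt hcpos)]
    rw [h4] at h3
    linarith
  apply ContinuousAlternatingMap.toAlternatingMap_injective
  refine Module.Basis.ext_alternating (EuclideanSpace.basisFun (Fin m) ℝ).toBasis ?_
  intro v hv
  simp only [OrthonormalBasis.coe_toBasis, ContinuousAlternatingMap.toAlternatingMap_zero,
    AlternatingMap.zero_apply]
  exact main v hv

end
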